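/- arXiv:2007.14703 — 4 statements merged into one kernel-verified Lean document; each statement's English description precedes it below -/
import Mathlib

section
/- Let 𝒴 be a finite nonempty set, H a real inner product space, ψ : 𝒴 → H with ‖ψ(y)‖ ≤ Q for all y ∈ 𝒴, and let z, m ∈ H. Suppose ŷ ∈ 𝒴 minimizes y ↦ ‖z − ψ(y)‖² over 𝒴 and y⋆ ∈ 𝒴 minimizes y ↦ ‖ψ(y)‖² − 2⟨ψ(y), m⟩ over 𝒴. Then (‖ψ(ŷ)‖² − 2⟨ψ(ŷ), m⟩) − (‖ψ(y⋆)‖² − 2⟨ψ(y⋆), m⟩) ≤ 2√(2Q² + Q⁴ + 1)·‖z − m‖. -/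
open scoped RealInnerProductSpace

/-- **Pointwise comparison inequality for the squared-distance loss.**
If `ŷ` minimizes `y ↦ ‖z − ψ(y)‖²` and `y⋆` minimizes `y ↦ ‖ψ(y)‖² − 2⟨ψ(y), m⟩`
over a finite nonempty set `𝒴`, and `‖ψ(y)‖ ≤ Q` for all `y`, then the excess inner
risk of `ŷ` is at most `2√(2Q² + Q⁴ + 1)·‖z − m‖`. -/
theorem pointwise_comparison_inequality
    {Y : Type*} [Fintype Y] [Nonempty Y]
    {H : Type*} [NormedAddCommGroup H] [InnerProductSpace ℝ H]
    (ψ : Y → H) (Q : ℝ) (hQ : ∀ y, ‖ψ y‖ ≤ Q) (z m : H)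
    (yhat ystar : Y)
    (hyhat : ∀ y, ‖z - ψ yhat‖ ^ 2 ≤ ‖z - ψ y‖ ^ 2)
    (hystar : ∀ y, ‖ψ ystar‖ ^ 2 - 2 * ⟪ψ ystar, m⟫ ≤ ‖ψ y‖ ^ 2 - 2 * ⟪ψ y, m⟫) :
    (‖ψ yhat‖ ^ 2 - 2 * ⟪ψ yhat, m⟫) - (‖ψ ystar‖ ^ 2 - 2 * ⟪ψ ystar, m⟫) ≤
      2 * Real.sqrt (2 * Q ^ 2 + Q ^ 4 + 1) * ‖z - m‖ := by
  have hQ0 : 0 ≤ Q := le_trans (norm_nonneg _) (hQ (Classical.arbitrary Y))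
  have hsqrt : Real.sqrt (2 * Q ^ 2 + Q ^ 4 + 1) = Q ^ 2 + 1 := by
    rw [show 2 * Q ^ 2 + Q ^ 4 + 1 = (Q ^ 2 + 1) ^ 2 by ring]
    exact Real.sqrt_sq (by positivity)
  have h1 := hyhat ystar
  rw [@norm_sub_sq_real, @norm_sub_sq_real] at h1
  have key : (‖ψ yhat‖ ^ 2 - 2 * ⟪ψ yhat, m⟫) - (‖ψ ystar‖ ^ 2 - 2 * ⟪ψ ystar, m⟫)
      ≤ 2 * ⟪ψ yhat - ψ ystar, z - m⟫ := by
    rw [inner_sub_left, inner_sub_right, inner_sub_right]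
    linarith [real_inner_comm z (ψ yhat), real_inner_comm z (ψ ystar)]
  have hcs : ⟪ψ yhat - ψ ystar, z - m⟫ ≤ ‖ψ yhat - ψ ystar‖ * ‖z - m‖ :=
    real_inner_le_norm _ _
  have hnorm : ‖ψ yhat - ψ ystar‖ ≤ Q ^ 2 + 1 := by
    have := norm_sub_le (ψ yhat) (ψ ystar)
    nlinarith [hQ yhat, hQ ystar, sq_nonneg (Q - 1)]
  have hzm : (0:ℝ) ≤ ‖z - m‖ := norm_nonneg _
  have h2 : ‖ψ yhat - ψ ystar‖ * ‖z - m‖ ≤ (Q ^ 2 + 1) * ‖z - m‖ :=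
    mul_le_mul_of_nonneg_right hnorm hzm
  rw [hsqrt]
  linarith
end

section
/- Let (Ω, 𝓕, μ) be a probability space, 𝒳 a measurable space, 𝒴 a finite nonempty set with the discrete σ-algebra, H a separable real Hilbert space, ψ : 𝒴 → H, and X : Ω → 𝒳, Y : Ω → 𝒴 measurable. Let h* : 𝒳 → H be measurable such that h* ∘ X is a version of the conditional expectation of ψ ∘ Y given the σ-algebra generated by X. Then for every measurable f : 𝒳 → 𝒴: E‖ψ(f(X)) − ψ(Y)‖² = E‖ψ(f(X)) − h*(X)‖² + E‖ψ(Y) − h*(X)‖². Consequently, any measurable f* : 𝒳 → 𝒴 with f*(x) ∈ argmin_{y ∈ 𝒴} ‖ψ(y) − h*(x)‖ for all x satisfies E‖ψ(f*(X)) − ψ(Y)‖² ≤ E‖ψ(f(X)) − ψ(Y)‖² for every measurable f : 𝒳 → 𝒴. -/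
/-!
In `L²(μ; H)` the conditional expectation given `m` is the orthogonal projection onto the
`m`-measurable functions. For an `m`-measurable `V`, the vector `V - E[U | m]` lies in that
subspace while `U - E[U | m]` is orthogonal to it, so Pythagoras splits `‖V - U‖²`. With
`m = σ(X)` and `V = ψ ∘ f ∘ X` this is the risk decomposition; only the first summand depends
on `f`, and nearest-neighbour decoding of `h*` minimises it pointwise.
-/

open MeasureTheory
open scoped RealInnerProductSpace ENNReal

section ConditionalExpectationPythagoras

variable {Ω : Type*} {m mΩ : MeasurableSpace Ω} {μ : Measure Ω}
  {H : Type*} [NormedAddCommGroup H] [InnerProductSpace ℝ H]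

theorem MeasureTheory.Lp.integral_norm_sub_sq_eq {F G : Lp H 2 μ} {f g : Ω → H}
    (hF : F =ᵐ[μ] f) (hG : G =ᵐ[μ] g) :
    ∫ ω, ‖f ω - g ω‖ ^ 2 ∂μ = ‖F - G‖ ^ 2 := by
  rw [← real_inner_self_eq_norm_sq, L2.inner_def]
  refine integral_congr_ae ?_
  filter_upwards [Lp.coeFn_sub F G, hF, hG] with ω hsub hf hg
  rw [hsub, Pi.sub_apply, hf, hg, real_inner_self_eq_norm_sq]

variable [CompleteSpace H]

theorem norm_sub_sq_eq_add_condExpL2 (hm : m ≤ mΩ) (F G : Lp H 2 μ)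
    (hG : AEStronglyMeasurable[m] G μ) :
    ‖G - F‖ ^ 2 =
      ‖G - (condExpL2 H ℝ hm F : Lp H 2 μ)‖ ^ 2 +
        ‖F - (condExpL2 H ℝ hm F : Lp H 2 μ)‖ ^ 2 := by
  set P : Lp H 2 μ := (condExpL2 H ℝ hm F : Lp H 2 μ)
  have hGP : AEStronglyMeasurable[m] (G - P : Lp H 2 μ) μ :=
    (hG.sub (aestronglyMeasurable_condExpL2 hm F)).congr (Lp.coeFn_sub G P).symm
  have horth : ⟪G - P, F - P⟫ = 0 := by
    rw [real_inner_comm, inner_sub_left, sub_eq_zero]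
    exact (inner_condExpL2_eq_inner_fun hm F (G - P) hGP).symm
  rw [show G - F = (G - P) - (F - P) by abel, norm_sub_sq_real, horth]
  ring

theorem integral_norm_sub_sq_eq_add_of_ae_eq_condExp [IsFiniteMeasure μ] (hm : m ≤ mΩ)
    {U V h : Ω → H} (hU : MemLp U 2 μ) (hV : MemLp V 2 μ) (hVm : AEStronglyMeasurable[m] V μ)
    (hh : h =ᵐ[μ] μ[U|m]) :
    ∫ ω, ‖V ω - U ω‖ ^ 2 ∂μ =
      (∫ ω, ‖V ω - h ω‖ ^ 2 ∂μ) + ∫ ω, ‖U ω - h ω‖ ^ 2 ∂μ := by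
  have hP : (condExpL2 H ℝ hm (hU.toLp U) : Lp H 2 μ) =ᵐ[μ] h :=
    (hU.condExpL2_ae_eq_condExp (𝕜 := ℝ) hm).trans hh.symm
  rw [Lp.integral_norm_sub_sq_eq hV.coeFn_toLp hU.coeFn_toLp,
    Lp.integral_norm_sub_sq_eq hV.coeFn_toLp hP, Lp.integral_norm_sub_sq_eq hU.coeFn_toLp hP]
  exact norm_sub_sq_eq_add_condExpL2 hm _ _ (hVm.congr hV.coeFn_toLp.symm)

end ConditionalExpectationPythagoras

theorem memLp_comp_of_finite {Ω : Type*} [MeasurableSpace Ω] {μ : Measure Ω}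
    [IsFiniteMeasure μ] {Y : Type*} [Finite Y] [MeasurableSpace Y] [DiscreteMeasurableSpace Y]
    {E : Type*} [NormedAddCommGroup E] (ψ : Y → E) {g : Ω → Y} (hg : Measurable g)
    (p : ℝ≥0∞) : MemLp (fun ω => ψ (g ω)) p μ :=
  MemLp.of_discrete.comp_of_map hg.aemeasurable

theorem risk_decomposition_and_bayes_predictor_general
    {Ω : Type*} [MeasurableSpace Ω] (μ : Measure Ω) [IsProbabilityMeasure μ]
    {X : Type*} [MeasurableSpace X]
    {Y : Type*} [Fintype Y] [MeasurableSpace Y] [DiscreteMeasurableSpace Y]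
    {H : Type*} [NormedAddCommGroup H] [InnerProductSpace ℝ H] [CompleteSpace H]
    (ψ : Y → H)
    (Xv : Ω → X) (Yv : Ω → Y) (hXv : Measurable Xv) (hYv : Measurable Yv)
    (hstar : X → H)
    (hstar_condexp : (fun ω => hstar (Xv ω)) =ᵐ[μ]
      μ[fun ω => ψ (Yv ω)|MeasurableSpace.comap Xv inferInstance]) :
    (∀ f : X → Y, Measurable f →
      ∫ ω, ‖ψ (f (Xv ω)) - ψ (Yv ω)‖ ^ 2 ∂μ =
        (∫ ω, ‖ψ (f (Xv ω)) - hstar (Xv ω)‖ ^ 2 ∂μ) +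
          ∫ ω, ‖ψ (Yv ω) - hstar (Xv ω)‖ ^ 2 ∂μ) ∧
    (∀ fstar : X → Y, Measurable fstar →
      (∀ x y, ‖ψ (fstar x) - hstar x‖ ≤ ‖ψ y - hstar x‖) →
      ∀ f : X → Y, Measurable f →
        ∫ ω, ‖ψ (fstar (Xv ω)) - ψ (Yv ω)‖ ^ 2 ∂μ ≤
          ∫ ω, ‖ψ (f (Xv ω)) - ψ (Yv ω)‖ ^ 2 ∂μ) := by
  have hψY := memLp_comp_of_finite (μ := μ) ψ hYv 2
  have decomp : ∀ f : X → Y, Measurable f →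
      ∫ ω, ‖ψ (f (Xv ω)) - ψ (Yv ω)‖ ^ 2 ∂μ =
        (∫ ω, ‖ψ (f (Xv ω)) - hstar (Xv ω)‖ ^ 2 ∂μ) +
          ∫ ω, ‖ψ (Yv ω) - hstar (Xv ω)‖ ^ 2 ∂μ := fun f hf =>
    integral_norm_sub_sq_eq_add_of_ae_eq_condExp hXv.comap_le hψY
      (memLp_comp_of_finite ψ (hf.comp hXv) 2)
      (StronglyMeasurable.of_discrete.comp_measurable
        (hf.comp (comap_measurable Xv))).aestronglyMeasurable hstar_condexp
  have hstar_memLp : MemLp (fun ω => hstar (Xv ω)) 2 μ :=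
    (memLp_congr_ae hstar_condexp).mpr (hψY.condExp one_le_two)
  have integrable_excess_risk : ∀ f : X → Y, Measurable f →
      Integrable (fun ω => ‖ψ (f (Xv ω)) - hstar (Xv ω)‖ ^ 2) μ := fun f hf =>
    (memLp_comp_of_finite ψ (hf.comp hXv) 2 |>.sub hstar_memLp).integrable_norm_pow two_ne_zero
  refine ⟨decomp, fun fstar hfstar hopt f hf => ?_⟩
  rw [decomp fstar hfstar, decomp f hf]
  gcongr ?_ + _
  exact integral_mono (integrable_excess_risk fstar hfstar) (integrable_excess_risk f hf) fun ω =>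
    pow_le_pow_left₀ (norm_nonneg _) (hopt (Xv ω) (f (Xv ω))) 2

/-- **Risk decomposition and Bayes optimality of nearest-neighbour decoding.**
With `h*(x) = E[ψ(Y) | X = x]`, for every measurable `f : 𝒳 → 𝒴`,
`E‖ψ(f(X)) − ψ(Y)‖² = E‖ψ(f(X)) − h*(X)‖² + E‖ψ(Y) − h*(X)‖²`; consequently any
measurable `f*` with `f*(x) ∈ argmin_y ‖ψ(y) − h*(x)‖` has minimal risk. -/
theorem risk_decomposition_and_bayes_predictor
    {Ω : Type*} [MeasurableSpace Ω] (μ : Measure Ω) [IsProbabilityMeasure μ]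
    {X : Type*} [MeasurableSpace X]
    {Y : Type*} [Fintype Y] [Nonempty Y] [MeasurableSpace Y] [DiscreteMeasurableSpace Y]
    {H : Type*} [NormedAddCommGroup H] [InnerProductSpace ℝ H] [CompleteSpace H]
    [SecondCountableTopology H] [MeasurableSpace H] [BorelSpace H]
    (ψ : Y → H)
    (Xv : Ω → X) (Yv : Ω → Y) (hXv : Measurable Xv) (hYv : Measurable Yv)
    (hstar : X → H) (hstar_meas : Measurable hstar)
    (hstar_condexp : (fun ω => hstar (Xv ω)) =ᵐ[μ]
      μ[fun ω => ψ (Yv ω)|MeasurableSpace.comap Xv inferInstance]) :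
    (∀ f : X → Y, Measurable f →
      ∫ ω, ‖ψ (f (Xv ω)) - ψ (Yv ω)‖ ^ 2 ∂μ =
        (∫ ω, ‖ψ (f (Xv ω)) - hstar (Xv ω)‖ ^ 2 ∂μ) +
          ∫ ω, ‖ψ (Yv ω) - hstar (Xv ω)‖ ^ 2 ∂μ) ∧
    (∀ fstar : X → Y, Measurable fstar →
      (∀ x y, ‖ψ (fstar x) - hstar x‖ ≤ ‖ψ y - hstar x‖) →
      ∀ f : X → Y, Measurable f →
        ∫ ω, ‖ψ (fstar (Xv ω)) - ψ (Yv ω)‖ ^ 2 ∂μ ≤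
          ∫ ω, ‖ψ (f (Xv ω)) - ψ (Yv ω)‖ ^ 2 ∂μ) :=
  risk_decomposition_and_bayes_predictor_general μ ψ Xv Yv hXv hYv hstar hstar_condexp
end

section
/- Let (Ω, 𝓕, μ) be a probability space, 𝒳 a measurable space, 𝒴 a finite set with discrete σ-algebra, H a separable real Hilbert space, ψ : 𝒴 → H, X : Ω → 𝒳 and Y : Ω → 𝒴 measurable, and h* : 𝒳 → H measurable such that h* ∘ X is a version of the conditional expectation of ψ ∘ Y given the σ-algebra generated by X. Let p ∈ ℕ, let G : H → ℝ^p be a bounded linear operator with GG* = Id_{ℝ^p} (where G* : ℝ^p → H is the adjoint), and let γ ∈ [0,1]. Then: γ·E‖Gh*(X) − Gψ(Y)‖² + (1−γ)·E‖G*Gψ(Y) − ψ(Y)‖² = γ·E‖G*Gh*(X) − h*(X)‖² + (1−2γ)·E‖G*Gψ(Y) − ψ(Y)‖² + γ·(E‖ψ(Y)‖² − E‖h*(X)‖²). -/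
open MeasureTheory ContinuousLinearMap
open scoped RealInnerProductSpace

/-!
Since `G G* = id`, `P = G* G` is an orthogonal projection and `‖P u - u‖² = ‖u‖² - ‖G u‖²`.
Since `G` commutes with conditional expectation, `G h*(X)` is a version of `E[G ψ(Y) | X]`, and
conditional expectation is the orthogonal projection of `L²` onto the `σ(X)`-measurable functions,
so `E‖G h*(X) - G ψ(Y)‖² = E‖G ψ(Y)‖² - E‖G h*(X)‖²`. Both sides of the identity are then the same
linear combination of `E‖ψ(Y)‖²`, `E‖h*(X)‖²`, `E‖G ψ(Y)‖²` and `E‖G h*(X)‖²`.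
-/

namespace MeasureTheory

variable {Ω E : Type*} {m m0 : MeasurableSpace Ω} {μ : Measure Ω} [NormedAddCommGroup E]

theorem MemLp.integrable_norm_sq {f : Ω → E} (hf : MemLp f 2 μ) :
    Integrable (fun ω => ‖f ω‖ ^ 2) μ :=
  hf.integrable_norm_pow two_ne_zero

variable [InnerProductSpace ℝ E]

theorem MemLp.integrable_inner {f g : Ω → E} (hf : MemLp f 2 μ) (hg : MemLp g 2 μ) :
    Integrable (fun ω => ⟪f ω, g ω⟫) μ :=
  (L2.integrable_inner (𝕜 := ℝ) hf.toLp hg.toLp).congr <| by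
    filter_upwards [hf.coeFn_toLp, hg.coeFn_toLp] with ω hfω hgω
    rw [hfω, hgω]

theorem integral_norm_sub_sq_eq {f g : Ω → E} (hf : MemLp f 2 μ) (hg : MemLp g 2 μ) :
    ∫ ω, ‖f ω - g ω‖ ^ 2 ∂μ =
      ∫ ω, ‖f ω‖ ^ 2 ∂μ - 2 * ∫ ω, ⟪f ω, g ω⟫ ∂μ + ∫ ω, ‖g ω‖ ^ 2 ∂μ := by
  have h_inner := (hf.integrable_inner hg).const_mul 2
  simp_rw [norm_sub_sq_real]
  rw [integral_add (f := fun ω => ‖f ω‖ ^ 2 - 2 * ⟪f ω, g ω⟫) (hf.integrable_norm_sq.sub h_inner)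
      hg.integrable_norm_sq, integral_sub hf.integrable_norm_sq h_inner, integral_const_mul]

variable [CompleteSpace E] [IsFiniteMeasure μ]

theorem integral_inner_condExp_self (hm : m ≤ m0) {g : Ω → E} (hg : MemLp g 2 μ) :
    ∫ ω, ⟪(μ[g|m]) ω, g ω⟫ ∂μ = ∫ ω, ‖(μ[g|m]) ω‖ ^ 2 ∂μ := by
  set F : Ω →₂[μ] E := hg.toLp
  set P : Ω →₂[μ] E := ↑(condExpL2 E ℝ hm F)
  have hP : P =ᵐ[μ] μ[g|m] := hg.condExpL2_ae_eq_condExp hm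
  -- `P` is the orthogonal projection of `g` onto a subspace containing `P` itself.
  have h_proj : ⟪P, P⟫ = ⟪F, P⟫ :=
    inner_condExpL2_eq_inner_fun hm _ _ (aestronglyMeasurable_condExpL2 hm _)
  rw [L2.inner_def, L2.inner_def] at h_proj
  calc ∫ ω, ⟪(μ[g|m]) ω, g ω⟫ ∂μ = ∫ ω, ⟪F ω, P ω⟫ ∂μ := by
        refine integral_congr_ae ?_
        filter_upwards [hP, hg.coeFn_toLp] with ω hPω hgω
        rw [hPω, hgω, real_inner_comm]
    _ = ∫ ω, ⟪P ω, P ω⟫ ∂μ := h_proj.symm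
    _ = ∫ ω, ‖(μ[g|m]) ω‖ ^ 2 ∂μ := by
        refine integral_congr_ae ?_
        filter_upwards [hP] with ω hPω
        rw [hPω, real_inner_self_eq_norm_sq]

theorem integral_norm_sub_sq_of_ae_eq_condExp (hm : m ≤ m0) {g c : Ω → E} (hg : MemLp g 2 μ)
    (hc : c =ᵐ[μ] μ[g|m]) :
    ∫ ω, ‖c ω - g ω‖ ^ 2 ∂μ = ∫ ω, ‖g ω‖ ^ 2 ∂μ - ∫ ω, ‖c ω‖ ^ 2 ∂μ := by
  have hc_memLp : MemLp c 2 μ := (hg.condExp one_le_two).ae_eq hc.symm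
  have h_inner : ∫ ω, ⟪c ω, g ω⟫ ∂μ = ∫ ω, ‖c ω‖ ^ 2 ∂μ := by
    have h_sq : ∫ ω, ‖c ω‖ ^ 2 ∂μ = ∫ ω, ‖(μ[g|m]) ω‖ ^ 2 ∂μ :=
      integral_congr_ae (hc.mono fun ω hω => by simp only [hω])
    rw [h_sq, ← integral_inner_condExp_self hm hg]
    exact integral_congr_ae (hc.mono fun ω hω => by simp only [hω])
  rw [integral_norm_sub_sq_eq hc_memLp hg, h_inner]
  ring

end MeasureTheory

section Projection

variable {H E : Type*} [NormedAddCommGroup H] [InnerProductSpace ℝ H] [CompleteSpace H]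
  [NormedAddCommGroup E] [InnerProductSpace ℝ E] [CompleteSpace E]

theorem norm_adjoint_apply_apply_sub_sq {G : H →L[ℝ] E}
    (hG : G ∘L adjoint G = ContinuousLinearMap.id ℝ E) (u : H) :
    ‖adjoint G (G u) - u‖ ^ 2 = ‖u‖ ^ 2 - ‖G u‖ ^ 2 := by
  have hGG : G (adjoint G (G u)) = G u := congrArg (fun L : E →L[ℝ] E => L (G u)) hG
  have h_inner : ⟪adjoint G (G u), u⟫ = ‖G u‖ ^ 2 := by
    rw [adjoint_inner_left, real_inner_self_eq_norm_sq]
  have h_norm : ‖adjoint G (G u)‖ ^ 2 = ‖G u‖ ^ 2 := by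
    rw [← real_inner_self_eq_norm_sq, adjoint_inner_left, hGG, real_inner_self_eq_norm_sq]
  rw [norm_sub_sq_real, h_inner, h_norm]
  ring

theorem integral_norm_adjoint_apply_apply_sub_sq {Ω : Type*} [MeasurableSpace Ω] {μ : Measure Ω}
    {G : H →L[ℝ] E} (hG : G ∘L adjoint G = ContinuousLinearMap.id ℝ E) {u : Ω → H}
    (hu : MemLp u 2 μ) :
    ∫ ω, ‖adjoint G (G (u ω)) - u ω‖ ^ 2 ∂μ = ∫ ω, ‖u ω‖ ^ 2 ∂μ - ∫ ω, ‖G (u ω)‖ ^ 2 ∂μ := by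
  simp_rw [norm_adjoint_apply_apply_sub_sq hG]
  exact integral_sub hu.integrable_norm_sq (G.comp_memLp' hu).integrable_norm_sq

end Projection

theorem oel_objective_eq_subspace_objective_general
    {Ω : Type*} [MeasurableSpace Ω] (μ : Measure Ω) [IsProbabilityMeasure μ]
    {X : Type*} [MeasurableSpace X]
    {Y : Type*} [Fintype Y] [MeasurableSpace Y] [DiscreteMeasurableSpace Y]
    {H : Type*} [NormedAddCommGroup H] [InnerProductSpace ℝ H] [CompleteSpace H]
    (ψ : Y → H)
    (Xv : Ω → X) (Yv : Ω → Y) (hXv : Measurable Xv) (hYv : Measurable Yv)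
    (hstar : X → H)
    (hstar_condexp : (fun ω => hstar (Xv ω)) =ᵐ[μ]
      μ[fun ω => ψ (Yv ω)|MeasurableSpace.comap Xv inferInstance])
    (p : ℕ) (G : H →L[ℝ] EuclideanSpace ℝ (Fin p))
    (hG : G ∘L (adjoint G) = ContinuousLinearMap.id ℝ (EuclideanSpace ℝ (Fin p)))
    (γ : ℝ) :
    γ * ∫ ω, ‖G (hstar (Xv ω)) - G (ψ (Yv ω))‖ ^ 2 ∂μ +
      (1 - γ) * ∫ ω, ‖(adjoint G) (G (ψ (Yv ω))) - ψ (Yv ω)‖ ^ 2 ∂μ =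
    γ * ∫ ω, ‖(adjoint G) (G (hstar (Xv ω))) - hstar (Xv ω)‖ ^ 2 ∂μ +
      (1 - 2 * γ) * ∫ ω, ‖(adjoint G) (G (ψ (Yv ω))) - ψ (Yv ω)‖ ^ 2 ∂μ +
      γ * ((∫ ω, ‖ψ (Yv ω)‖ ^ 2 ∂μ) - ∫ ω, ‖hstar (Xv ω)‖ ^ 2 ∂μ) := by
  have hψY : MemLp (fun ω => ψ (Yv ω)) 2 μ :=
    (MemLp.of_discrete (μ := μ.map Yv)).comp_of_map hYv.aemeasurable
  have hh : MemLp (fun ω => hstar (Xv ω)) 2 μ :=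
    (hψY.condExp one_le_two).ae_eq hstar_condexp.symm
  have hGh : (fun ω => G (hstar (Xv ω))) =ᵐ[μ]
      μ[fun ω => G (ψ (Yv ω))|MeasurableSpace.comap Xv inferInstance] :=
    (hstar_condexp.fun_comp G).trans (G.comp_condExp_comm (hψY.integrable one_le_two))
  have hGψY : MemLp (fun ω => G (ψ (Yv ω))) 2 μ := G.comp_memLp' hψY
  rw [integral_norm_sub_sq_of_ae_eq_condExp hXv.comap_le hGψY hGh,
    integral_norm_adjoint_apply_apply_sub_sq hG hψY,
    integral_norm_adjoint_apply_apply_sub_sq hG hh]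
  ring

/-- **Equivalence of the OEL objective with the subspace-learning objective.**
With `h*(x) = E[ψ(Y) | X = x]` and `G : H → ℝ^p` with orthonormal rows (`GG* = Id`),
for every `γ ∈ [0,1]`:
`γ·E‖Gh*(X) − Gψ(Y)‖² + (1−γ)·E‖G*Gψ(Y) − ψ(Y)‖²
  = γ·E‖G*Gh*(X) − h*(X)‖² + (1−2γ)·E‖G*Gψ(Y) − ψ(Y)‖² + γ·(E‖ψ(Y)‖² − E‖h*(X)‖²)`. -/
theorem oel_objective_eq_subspace_objective
    {Ω : Type*} [MeasurableSpace Ω] (μ : Measure Ω) [IsProbabilityMeasure μ]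
    {X : Type*} [MeasurableSpace X]
    {Y : Type*} [Fintype Y] [MeasurableSpace Y] [DiscreteMeasurableSpace Y]
    {H : Type*} [NormedAddCommGroup H] [InnerProductSpace ℝ H] [CompleteSpace H]
    [SecondCountableTopology H] [MeasurableSpace H] [BorelSpace H]
    (ψ : Y → H)
    (Xv : Ω → X) (Yv : Ω → Y) (hXv : Measurable Xv) (hYv : Measurable Yv)
    (hstar : X → H) (hstar_meas : Measurable hstar)
    (hstar_condexp : (fun ω => hstar (Xv ω)) =ᵐ[μ]
      μ[fun ω => ψ (Yv ω)|MeasurableSpace.comap Xv inferInstance])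
    (p : ℕ) (G : H →L[ℝ] EuclideanSpace ℝ (Fin p))
    (hG : G ∘L (adjoint G) = ContinuousLinearMap.id ℝ (EuclideanSpace ℝ (Fin p)))
    (γ : ℝ) (hγ : γ ∈ Set.Icc (0 : ℝ) 1) :
    γ * ∫ ω, ‖G (hstar (Xv ω)) - G (ψ (Yv ω))‖ ^ 2 ∂μ +
      (1 - γ) * ∫ ω, ‖(adjoint G) (G (ψ (Yv ω))) - ψ (Yv ω)‖ ^ 2 ∂μ =
    γ * ∫ ω, ‖(adjoint G) (G (hstar (Xv ω))) - hstar (Xv ω)‖ ^ 2 ∂μ +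
      (1 - 2 * γ) * ∫ ω, ‖(adjoint G) (G (ψ (Yv ω))) - ψ (Yv ω)‖ ^ 2 ∂μ +
      γ * ((∫ ω, ‖ψ (Yv ω)‖ ^ 2 ∂μ) - ∫ ω, ‖hstar (Xv ω)‖ ^ 2 ∂μ) :=
  oel_objective_eq_subspace_objective_general μ ψ Xv Yv hXv hYv hstar hstar_condexp p G hG γ
end

section
/- Let (Ω, 𝓕, μ) be a probability space, 𝒳 a measurable space, 𝒴 a finite set with discrete σ-algebra, H a separable real Hilbert space, ψ : 𝒴 → H, X : Ω → 𝒳 and Y : Ω → 𝒴 measurable, and h* : 𝒳 → H measurable such that h* ∘ X is a version of the conditional expectation of ψ ∘ Y given the σ-algebra generated by X. Let P : H → H be a bounded linear operator and c ∈ [0,1]. Then: E‖Ph*(X) − h*(X)‖² ≤ c·E‖Ph*(X) − h*(X)‖² + (1−c)·E‖Pψ(Y) − ψ(Y)‖². -/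
open MeasureTheory

/-! The operator `I - P` commutes with conditional expectation, so `(I - P) h*(X)` is the
conditional expectation of `(I - P) ψ(Y)` given `X`, and conditional Jensen for the convex
function `‖·‖²` bounds its second moment by that of `(I - P) ψ(Y)`. The claimed inequality is a
convex combination of this bound with the trivial one. -/

theorem integral_norm_condExp_sq_le {Ω E : Type*} [NormedAddCommGroup E] [NormedSpace ℝ E]
    [CompleteSpace E] {m m₀ : MeasurableSpace Ω} {μ : Measure Ω} (hm : m ≤ m₀)
    [SigmaFinite (μ.trim hm)] {f : Ω → E} (hf : Integrable (fun ω => ‖f ω‖ ^ 2) μ) :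
    ∫ ω, ‖μ[f|m] ω‖ ^ 2 ∂μ ≤ ∫ ω, ‖f ω‖ ^ 2 ∂μ := by
  have hf' : Integrable (fun ω => ‖f ω‖ ^ (2 : ℝ)) μ := by simpa only [Real.rpow_two] using hf
  have hjensen := Integrable.norm_condExp_rpow_le (m := m) one_le_two hf'
  simp only [Real.rpow_two] at hjensen
  calc ∫ ω, ‖μ[f|m] ω‖ ^ 2 ∂μ ≤ ∫ ω, μ[fun ω => ‖f ω‖ ^ 2|m] ω ∂μ :=
        integral_mono_of_nonneg (.of_forall fun _ => by positivity) integrable_condExp hjensen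
    _ = ∫ ω, ‖f ω‖ ^ 2 ∂μ := integral_condExp hm

theorem reconstruction_error_jensen_bound_general
    {Ω : Type*} [MeasurableSpace Ω] (μ : Measure Ω) [IsProbabilityMeasure μ]
    {X : Type*} [MeasurableSpace X]
    {Y : Type*} [Fintype Y] [MeasurableSpace Y] [DiscreteMeasurableSpace Y]
    {H : Type*} [NormedAddCommGroup H] [InnerProductSpace ℝ H] [CompleteSpace H]
    (ψ : Y → H)
    (Xv : Ω → X) (Yv : Ω → Y) (hXv : Measurable Xv) (hYv : Measurable Yv)
    (hstar : X → H)
    (hstar_condexp : (fun ω => hstar (Xv ω)) =ᵐ[μ]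
      μ[fun ω => ψ (Yv ω)|MeasurableSpace.comap Xv inferInstance])
    (P : H →L[ℝ] H) (c : ℝ) (hc : c ∈ Set.Icc (0 : ℝ) 1) :
    ∫ ω, ‖P (hstar (Xv ω)) - hstar (Xv ω)‖ ^ 2 ∂μ ≤
      c * (∫ ω, ‖P (hstar (Xv ω)) - hstar (Xv ω)‖ ^ 2 ∂μ) +
        (1 - c) * ∫ ω, ‖P (ψ (Yv ω)) - ψ (Yv ω)‖ ^ 2 ∂μ := by
  set T : H →L[ℝ] H := P - ContinuousLinearMap.id ℝ H
  have hψY : Integrable (fun ω => ψ (Yv ω)) μ := Integrable.of_finite.comp_measurable hYv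
  have hTψY : Integrable (fun ω => ‖T (ψ (Yv ω))‖ ^ 2) μ :=
    (Integrable.of_finite (f := fun y => ‖T (ψ y)‖ ^ 2)).comp_measurable hYv
  have hT_condExp : (fun ω => T (hstar (Xv ω))) =ᵐ[μ]
      μ[fun ω => T (ψ (Yv ω))|MeasurableSpace.comap Xv inferInstance] :=
    (hstar_condexp.fun_comp T).trans (T.comp_condExp_comm hψY)
  have hjensen : ∫ ω, ‖T (hstar (Xv ω))‖ ^ 2 ∂μ ≤ ∫ ω, ‖T (ψ (Yv ω))‖ ^ 2 ∂μ :=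
    calc ∫ ω, ‖T (hstar (Xv ω))‖ ^ 2 ∂μ
        = ∫ ω, ‖μ[fun ω => T (ψ (Yv ω))|MeasurableSpace.comap Xv inferInstance] ω‖ ^ 2 ∂μ :=
          integral_congr_ae (hT_condExp.fun_comp (‖·‖ ^ 2))
      _ ≤ _ := integral_norm_condExp_sq_le hXv.comap_le hTψY
  change ∫ ω, ‖T (hstar (Xv ω))‖ ^ 2 ∂μ ≤
    c * ∫ ω, ‖T (hstar (Xv ω))‖ ^ 2 ∂μ + (1 - c) * ∫ ω, ‖T (ψ (Yv ω))‖ ^ 2 ∂μ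
  linarith [mul_le_mul_of_nonneg_left hjensen (sub_nonneg.2 hc.2)]

/-- **Jensen bound on the reconstruction error (Lemma 2 of the paper).**
With `h*(x) = E[ψ(Y) | X = x]`, a bounded linear `P : H → H` and `c ∈ [0,1]`,
`E‖Ph*(X) − h*(X)‖² ≤ c·E‖Ph*(X) − h*(X)‖² + (1−c)·E‖Pψ(Y) − ψ(Y)‖²`. -/
theorem reconstruction_error_jensen_bound
    {Ω : Type*} [MeasurableSpace Ω] (μ : Measure Ω) [IsProbabilityMeasure μ]
    {X : Type*} [MeasurableSpace X]
    {Y : Type*} [Fintype Y] [MeasurableSpace Y] [DiscreteMeasurableSpace Y]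
    {H : Type*} [NormedAddCommGroup H] [InnerProductSpace ℝ H] [CompleteSpace H]
    [SecondCountableTopology H] [MeasurableSpace H] [BorelSpace H]
    (ψ : Y → H)
    (Xv : Ω → X) (Yv : Ω → Y) (hXv : Measurable Xv) (hYv : Measurable Yv)
    (hstar : X → H) (hstar_meas : Measurable hstar)
    (hstar_condexp : (fun ω => hstar (Xv ω)) =ᵐ[μ]
      μ[fun ω => ψ (Yv ω)|MeasurableSpace.comap Xv inferInstance])
    (P : H →L[ℝ] H) (c : ℝ) (hc : c ∈ Set.Icc (0 : ℝ) 1) :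
    ∫ ω, ‖P (hstar (Xv ω)) - hstar (Xv ω)‖ ^ 2 ∂μ ≤
      c * (∫ ω, ‖P (hstar (Xv ω)) - hstar (Xv ω)‖ ^ 2 ∂μ) +
        (1 - c) * ∫ ω, ‖P (ψ (Yv ω)) - ψ (Yv ω)‖ ^ 2 ∂μ :=
  reconstruction_error_jensen_bound_general μ ψ Xv Yv hXv hYv hstar hstar_condexp P c hc
end
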